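/- arXiv:1608.06904 — 3 statements merged into one kernel-verified Lean document; each statement's English description precedes it below -/
import Mathlib

section
/- Let T be a thick subcategory of a triangulated category D, and suppose D admits a semi-orthogonal decomposition ⟨Z⊥, Z⟩ where Z = thick(Z₀) for an exceptional object Z₀ ∈ T. If the thick subcategory T ∩ Z⊥ of Z⊥ is generated by objects E₁,…,Eₐ, then T is generated (as a thick subcategory of D) by E₁,…,Eₐ,Z₀. -/
open CategoryTheory Limits Pretriangulated

variable {C : Type*} [Category C] [HasZeroObject C] [Preadditive C] [HasShift C ℤ]
  [∀ n : ℤ, (CategoryTheory.shiftFunctor C n).Additive] [Pretriangulated C]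

/-- The class of objects of the thick subcategory generated by a set `S` of objects:
closure under shifts, triangles (cones) and direct summands. -/
inductive ThickGen (S : Set C) : C → Prop
  | of {X : C} : X ∈ S → ThickGen S X
  | shift {X : C} (n : ℤ) : ThickGen S X → ThickGen S (X⟦n⟧)
  | tri (T : Triangle C) (hT : T ∈ distTriang C) :
      ThickGen S T.obj₁ → ThickGen S T.obj₂ → ThickGen S T.obj₃
  | summand {X Y : C} (s : Y ⟶ X) (r : X ⟶ Y) (hsr : s ≫ r = 𝟙 Y) :
      ThickGen S X → ThickGen S Y


theorem ThickGen.mono {S S' : Set C} (h : S ⊆ S') {X : C} (hX : ThickGen S X) :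
    ThickGen S' X := by
  induction hX with
  | of hx => exact .of (h hx)
  | shift n _ ih => exact .shift n ih
  | tri T hT _ _ ih1 ih2 => exact .tri T hT ih1 ih2
  | summand s r hsr _ ih => exact .summand s r hsr ih

/-- If `T` is a thick subcategory of `D`, `D` admits a semi-orthogonal decomposition
`⟨Z⊥, Z⟩` with `Z = thick(Z₀)` for an exceptional object `Z₀ ∈ T`, and `T ∩ Z⊥` is
generated by `E₁, …, Eₐ`, then `T` is generated by `E₁, …, Eₐ, Z₀`. -/
theorem thick_generated_by_sod
    (k : Type*) [Field k] [Linear k C]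
    (T : Set C) (hT : ∀ X : C, ThickGen T X → X ∈ T)
    (Z₀ : C) (hZ₀T : Z₀ ∈ T)
    (hexc_shift : ∀ i : ℤ, i ≠ 0 → ∀ f : Z₀ ⟶ Z₀⟦i⟧, f = 0)
    (hexc_end : ∀ f : Z₀ ⟶ Z₀, ∃ c : k, f = c • 𝟙 Z₀)
    (hsod : ∀ X : C, ∃ (B A : C) (f : B ⟶ X) (g : X ⟶ A) (h : A ⟶ B⟦(1:ℤ)⟧),
      Triangle.mk f g h ∈ (distTriang C) ∧ ThickGen {Z₀} B ∧
      (∀ B' : C, ThickGen {Z₀} B' → ∀ φ : B' ⟶ A, φ = 0))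
    (a : ℕ) (E : Fin a → C)
    (hE : ∀ i, E i ∈ T ∧ (∀ B' : C, ThickGen {Z₀} B' → ∀ φ : B' ⟶ E i, φ = 0))
    (hgen : ∀ X : C, X ∈ T → (∀ B' : C, ThickGen {Z₀} B' → ∀ φ : B' ⟶ X, φ = 0) →
      ThickGen (Set.range E) X) :
    T = {X : C | ThickGen (Set.range E ∪ {Z₀}) X} := by
  ext X
  simp only [Set.mem_setOf_eq]
  constructor
  · intro hX
    obtain ⟨B, A, f, g, h, hdist, hB, horth⟩ := hsod X
    have hAT : A ∈ T := hT A (.tri _ hdist (hB.mono (by simp [hZ₀T])) (.of hX))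
    have hAgen : ThickGen (Set.range E) A := hgen A hAT horth
    have hinv := inv_rot_of_distTriang _ hdist
    exact .tri _ hinv (.shift (-1) (hAgen.mono Set.subset_union_left))
      (hB.mono (by intro x hx; exact Or.inr hx))
  · intro hX
    refine hT X (hX.mono ?_)
    rintro x (⟨i, rfl⟩ | rfl)
    · exact (hE i).1
    · exact hZ₀T
end

section
/- Let α̂₁: [a₁,b₁] → D and α̂₂: [a₂,b₂] → D be two chords of the closed disc sharing the endpoint v = α̂₁(a₁) = α̂₂(a₂), with other endpoints u₁ = α̂₁(b₁) ≠ u₂ = α̂₂(b₂) distinct from v. After perturbing α̂₁ by an isotopy moving v slightly anticlockwise along the boundary, the perturbed chord crosses α̂₂ if and only if u₁ <_v u₂, where <_v is the linear order on the boundary circle minus v obtained by cutting the clockwise cyclic order at v. -/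
open Real

noncomputable def pcross (u v : ℝ × ℝ) : ℝ := u.1 * v.2 - u.2 * v.1

lemma trig_id (x y : ℝ) :
    Real.sin (2*x + 2*y) - Real.sin (2*x) - Real.sin (2*y)
      = -4 * Real.sin x * Real.sin y * Real.sin (x+y) := by
  rw [show 2*x + 2*y = 2*(x+y) by ring, Real.sin_two_mul, Real.sin_two_mul,
    Real.sin_two_mul, Real.sin_add, Real.cos_add]
  linear_combination (2*Real.sin x*Real.cos x) * Real.sin_sq_add_cos_sq y
    + (2*Real.sin y*Real.cos y) * Real.sin_sq_add_cos_sq x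

lemma cross_circle (α β γ : ℝ) :
    pcross ((Real.cos β, -Real.sin β) - (Real.cos α, -Real.sin α))
          ((Real.cos γ, -Real.sin γ) - (Real.cos α, -Real.sin α)) =
      -4 * Real.sin ((β-α)/2) * Real.sin ((γ-β)/2) * Real.sin ((γ-α)/2) := by
  have h := trig_id ((β-α)/2) ((γ-β)/2)
  rw [show 2*((β-α)/2) + 2*((γ-β)/2) = γ - α by ring,
      show 2*((β-α)/2) = β - α by ring, show 2*((γ-β)/2) = γ - β by ring,
      show (β-α)/2 + (γ-β)/2 = (γ-α)/2 by ring] at h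
  rw [Real.sin_sub γ α, Real.sin_sub β α, Real.sin_sub γ β] at h
  simp only [pcross, Prod.fst_sub, Prod.snd_sub]
  linear_combination h

lemma cross_affine (e p a b : ℝ × ℝ) (t : ℝ) :
    pcross e (a + t • (b - a) - p) = (1-t) * pcross e (a - p) + t * pcross e (b - p) := by
  simp only [pcross, Prod.fst_sub, Prod.snd_sub, Prod.fst_add, Prod.snd_add,
    Prod.smul_fst, Prod.smul_snd, smul_eq_mul]
  ring

lemma exists_root (A B : ℝ) (h : A * B < 0) :
    ∃ t : ℝ, 0 ≤ t ∧ t ≤ 1 ∧ (1-t) * A + t * B = 0 := by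
  have hAB : A - B ≠ 0 := by
    intro hq
    have hab : A = B := by linarith
    rw [hab] at h
    nlinarith [mul_self_nonneg B]
  refine ⟨A / (A - B), ?_, ?_, ?_⟩
  · rcases lt_or_gt_of_ne hAB with hn | hp
    · have hA : A < 0 := by nlinarith
      have he : A / (A - B) = (-A) / (B - A) := by
        rw [← neg_div_neg_eq]; ring_nf
      rw [he]
      apply div_nonneg <;> linarith
    · have hA : 0 < A := by nlinarith
      apply div_nonneg <;> linarith
  · rcases lt_or_gt_of_ne hAB with hn | hp
    · have hA : A < 0 := by nlinarith
      have hB : 0 < B := by nlinarith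
      have he : A / (A - B) = (-A) / (B - A) := by
        rw [← neg_div_neg_eq]; ring_nf
      rw [he, div_le_one (by linarith)]
      linarith
    · have hB : B < 0 := by nlinarith
      rw [div_le_one hp]
      linarith
  · field_simp
    ring

lemma unit_interval_of (C D s : ℝ) (h : C * D < 0) (hs : (1-s) * C + s * D = 0) :
    0 ≤ s ∧ s ≤ 1 := by
  have h2 : s * (D * D) = -((1-s)*(C*D)) := by linear_combination D * hs
  have h3 : (1-s) * (C * C) = -(s*(C*D)) := by linear_combination C * hs
  constructor
  · nlinarith [sq_nonneg D, sq_nonneg C]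
  · nlinarith [sq_nonneg D, sq_nonneg C]

lemma exists_smul_of_cross_eq_zero (d w : ℝ × ℝ) (hd : d ≠ 0) (h : pcross d w = 0) :
    ∃ s : ℝ, w = s • d := by
  simp only [pcross] at h
  by_cases h1 : d.1 = 0
  · have h2 : d.2 ≠ 0 := by
      intro h2; exact hd (Prod.ext h1 h2)
    refine ⟨w.2 / d.2, ?_⟩
    have hw1 : w.1 = 0 := by
      rw [h1] at h
      simp at h
      rcases h with h | h
      · exact absurd h h2
      · exact h
    apply Prod.ext
    · simp [hw1, h1, Prod.smul_fst]
    · simp only [Prod.smul_snd, smul_eq_mul]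
      field_simp
  · refine ⟨w.1 / d.1, ?_⟩
    apply Prod.ext
    · simp only [Prod.smul_fst, smul_eq_mul]
      field_simp
    · simp only [Prod.smul_snd, smul_eq_mul]
      field_simp
      linear_combination h

lemma segs_cross (p1 p2 q1 q2 : ℝ × ℝ)
    (hf : pcross (p2-p1) (q1-p1) * pcross (p2-p1) (q2-p1) < 0)
    (hg : pcross (q2-q1) (p1-q1) * pcross (q2-q1) (p2-q1) < 0) :
    (segment ℝ p1 p2 ∩ segment ℝ q1 q2).Nonempty := by
  obtain ⟨t, ht0, ht1, htA⟩ := exists_root _ _ hf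
  set x := q1 + t • (q2 - q1) with hxdef
  have hxq : x ∈ segment ℝ q1 q2 := by
    rw [segment_eq_image']
    exact ⟨t, ⟨ht0, ht1⟩, rfl⟩
  have hd : p2 - p1 ≠ 0 := by
    intro h0
    rw [h0] at hf
    simp [pcross] at hf
  have hx0 : pcross (p2 - p1) (x - p1) = 0 := by
    rw [hxdef, cross_affine]
    linarith [htA]
  obtain ⟨s, hs⟩ := exists_smul_of_cross_eq_zero _ _ hd hx0
  have hxp : x = p1 + s • (p2 - p1) := by
    rw [← hs]; abel
  have hzero : pcross (q2 - q1) (x - q1) = 0 := by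
    have hxx : x - q1 = t • (q2 - q1) := by rw [hxdef]; abel
    rw [hxx]
    simp only [pcross, Prod.smul_fst, Prod.smul_snd, smul_eq_mul]
    ring
  have heq : (1-s) * pcross (q2-q1) (p1-q1) + s * pcross (q2-q1) (p2-q1) = 0 := by
    rw [← cross_affine, ← hxp]
    exact hzero
  obtain ⟨hs0, hs1⟩ := unit_interval_of _ _ _ hg heq
  refine ⟨x, ?_, hxq⟩
  rw [segment_eq_image']
  exact ⟨s, ⟨hs0, hs1⟩, hxp.symm⟩

/-- Two chords of the unit disc sharing the endpoint `v`: parametrising the boundary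
circle clockwise by `θ ↦ (cos θ, -sin θ)` with `v` at angle `0`, the other endpoints
are at clockwise angles `a₁ ≠ a₂ ∈ (0, 2π)` and the perturbed copy of `v` (moved
slightly anticlockwise, past all relevant endpoints) is at angle `a'` with
`max a₁ a₂ < a' < 2π`.  The perturbed chord (from angle `a'` to `a₁`) crosses the
chord from `v` to angle `a₂` if and only if `a₁ < a₂`, i.e. iff `u₁ <_v u₂` in the
linear order obtained by cutting the clockwise cyclic order at `v`. -/
theorem perturbed_chord_crosses_iff (a₁ a₂ a' : ℝ)
    (h₁ : 0 < a₁) (h₂ : 0 < a₂) (hne : a₁ ≠ a₂)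
    (ha' : max a₁ a₂ < a') (h2pi : a' < 2 * Real.pi) :
    ((segment ℝ ((Real.cos a', -Real.sin a') : ℝ × ℝ) (Real.cos a₁, -Real.sin a₁) ∩
        segment ℝ ((Real.cos 0, -Real.sin 0) : ℝ × ℝ)
          (Real.cos a₂, -Real.sin a₂)).Nonempty ↔ a₁ < a₂) := by
  have hpi : 0 < Real.pi := Real.pi_pos
  have ha1 : a₁ < a' := lt_of_le_of_lt (le_max_left _ _) ha'
  have ha2 : a₂ < a' := lt_of_le_of_lt (le_max_right _ _) ha'
  have P1 : 0 < Real.sin (a₁/2) :=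
    Real.sin_pos_of_pos_of_lt_pi (by linarith) (by linarith)
  have P2 : 0 < Real.sin (a₂/2) :=
    Real.sin_pos_of_pos_of_lt_pi (by linarith) (by linarith)
  have P3 : 0 < Real.sin (a'/2) :=
    Real.sin_pos_of_pos_of_lt_pi (by linarith) (by linarith)
  have P'1 : 0 < Real.sin ((a'-a₁)/2) :=
    Real.sin_pos_of_pos_of_lt_pi (by linarith) (by linarith)
  have P'2 : 0 < Real.sin ((a'-a₂)/2) :=
    Real.sin_pos_of_pos_of_lt_pi (by linarith) (by linarith)
  have E1 : Real.sin ((a₁-a')/2) = -Real.sin ((a'-a₁)/2) := by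
    rw [show (a₁-a')/2 = -((a'-a₁)/2) by ring, Real.sin_neg]
  have E2 : Real.sin ((0-a₁)/2) = -Real.sin (a₁/2) := by
    rw [show ((0:ℝ)-a₁)/2 = -(a₁/2) by ring, Real.sin_neg]
  have E3 : Real.sin ((0-a')/2) = -Real.sin (a'/2) := by
    rw [show ((0:ℝ)-a')/2 = -(a'/2) by ring, Real.sin_neg]
  have E4 : Real.sin ((a₂-a')/2) = -Real.sin ((a'-a₂)/2) := by
    rw [show (a₂-a')/2 = -((a'-a₂)/2) by ring, Real.sin_neg]
  have E5 : Real.sin ((a₂-0)/2) = Real.sin (a₂/2) := by norm_num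
  have E6 : Real.sin ((a'-0)/2) = Real.sin (a'/2) := by norm_num
  have E7 : Real.sin ((a₁-0)/2) = Real.sin (a₁/2) := by norm_num
  rcases hne.lt_or_gt with hlt | hlt
  · -- a₁ < a₂ : the segments cross
    have P21 : 0 < Real.sin ((a₂-a₁)/2) :=
      Real.sin_pos_of_pos_of_lt_pi (by linarith) (by linarith)
    have E8 : Real.sin ((a₁-a₂)/2) = -Real.sin ((a₂-a₁)/2) := by
      rw [show (a₁-a₂)/2 = -((a₂-a₁)/2) by ring, Real.sin_neg]
    refine iff_of_true (segs_cross _ _ _ _ ?_ ?_) hlt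
    · rw [cross_circle a' a₁ 0, cross_circle a' a₁ a₂, E1, E2, E3, E4]
      nlinarith [mul_pos (mul_pos P'1 P1) P3, mul_pos (mul_pos P'1 P21) P'2]
    · rw [cross_circle 0 a₂ a', cross_circle 0 a₂ a₁, E5, E6, E7, E8]
      nlinarith [mul_pos (mul_pos P2 P'2) P3, mul_pos (mul_pos P2 P21) P1]
  · -- a₂ < a₁ : the segments are disjoint
    have P12 : 0 < Real.sin ((a₁-a₂)/2) :=
      Real.sin_pos_of_pos_of_lt_pi (by linarith) (by linarith)
    refine iff_of_false ?_ (by linarith)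
    rintro ⟨x, hx1, hx2⟩
    rw [segment_eq_image'] at hx1 hx2
    obtain ⟨s, ⟨hs0, hs1⟩, hxs⟩ := hx1
    obtain ⟨t, ⟨ht0, ht1⟩, hxt⟩ := hx2
    simp only at hxs hxt
    -- f(x) = 0 since x lies on the line through v and u₂
    have hzero : pcross ((Real.cos a₂, -Real.sin a₂) - (Real.cos 0, -Real.sin 0))
        (x - (Real.cos 0, -Real.sin 0)) = 0 := by
      have hxx : x - ((Real.cos 0, -Real.sin 0) : ℝ × ℝ)
          = t • ((Real.cos a₂, -Real.sin a₂) - (Real.cos 0, -Real.sin 0)) := by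
        rw [← hxt]; abel
      rw [hxx]
      simp only [pcross, Prod.smul_fst, Prod.smul_snd, smul_eq_mul]
      ring
    have hval : pcross ((Real.cos a₂, -Real.sin a₂) - (Real.cos 0, -Real.sin 0))
        (x - (Real.cos 0, -Real.sin 0))
        = (1-s) * pcross ((Real.cos a₂, -Real.sin a₂) - (Real.cos 0, -Real.sin 0))
            ((Real.cos a', -Real.sin a') - (Real.cos 0, -Real.sin 0))
          + s * pcross ((Real.cos a₂, -Real.sin a₂) - (Real.cos 0, -Real.sin 0))
            ((Real.cos a₁, -Real.sin a₁) - (Real.cos 0, -Real.sin 0)) := by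
      rw [← hxs]
      exact cross_affine _ _ _ _ s
    have hC : pcross ((Real.cos a₂, -Real.sin a₂) - (Real.cos 0, -Real.sin 0))
        ((Real.cos a', -Real.sin a') - (Real.cos 0, -Real.sin 0)) < 0 := by
      rw [cross_circle 0 a₂ a', E5, E6]
      nlinarith [mul_pos (mul_pos P2 P'2) P3]
    have hD : pcross ((Real.cos a₂, -Real.sin a₂) - (Real.cos 0, -Real.sin 0))
        ((Real.cos a₁, -Real.sin a₁) - (Real.cos 0, -Real.sin 0)) < 0 := by
      rw [cross_circle 0 a₂ a₁, E5, E7]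
      nlinarith [mul_pos (mul_pos P2 P12) P1]
    set C := pcross ((Real.cos a₂, -Real.sin a₂) - (Real.cos 0, -Real.sin 0))
      ((Real.cos a', -Real.sin a') - (Real.cos 0, -Real.sin 0))
    set D := pcross ((Real.cos a₂, -Real.sin a₂) - (Real.cos 0, -Real.sin 0))
      ((Real.cos a₁, -Real.sin a₁) - (Real.cos 0, -Real.sin 0))
    have hsum : (1-s) * C + s * D = 0 := by rw [← hval]; exact hzero
    have t1 : (1-s) * C ≤ 0 :=
      mul_nonpos_of_nonneg_of_nonpos (by linarith) hC.le
    have t2 : s * D ≤ 0 :=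
      mul_nonpos_of_nonneg_of_nonpos hs0 hD.le
    have hCz : (1-s) * C = 0 := le_antisymm t1 (by linarith)
    rcases mul_eq_zero.mp hCz with h | h
    · have hs' : s = 1 := by linarith
      rw [hs'] at hsum
      norm_num at hsum
      linarith
    · linarith
end

section
/- In a triangulated category, suppose given triangles A₀ → ⊕_{i=1}^d Aᵢ → C and Σ⁻¹cone(f_k) → A₀ → A_k → cone(f_k) where f_k is the k-th component of the first map. Then there is a triangle Σ⁻¹cone(f_k) → ⊕_{i≠k} Aᵢ → C → cone(f_k), i.e., C is also the cone of an induced morphism Σ⁻¹cone(f_k) → ⊕_{i≠k} Aᵢ. -/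
/-!
Splitting off the summand `A k` gives a split distinguished triangle
`⨁_{i ≠ k} Aᵢ → ⨁ A → A k --0-->`, so the cone of the projection `π_k` is `(⨁_{i ≠ k} Aᵢ)⟦1⟧`.
The octahedral axiom for the composite `f ≫ π_k` then yields a distinguished triangle
`Cn → Cfk → (⨁_{i ≠ k} Aᵢ)⟦1⟧ → Cn⟦1⟧`; rotating it backwards twice gives the claim.
-/

open CategoryTheory Limits Pretriangulated

namespace CategoryTheory.Limits

variable {C : Type*} [Category C] {J : Type*} [DecidableEq J]

section

variable [HasZeroMorphisms C] (f : J → C) [HasBiproduct f] (k : J)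
  [HasBiproduct (Subtype.restrict (· ≠ k) f)]

noncomputable def biproduct.binaryBiconeOfNe :
    BinaryBicone (⨁ Subtype.restrict (· ≠ k) f) (f k) where
  pt := ⨁ f
  fst := biproduct.toSubtype f _
  snd := biproduct.π f k
  inl := biproduct.fromSubtype f _
  inr := biproduct.ι f k
  inl_fst := biproduct.fromSubtype_toSubtype f _
  inl_snd := by simp [biproduct.fromSubtype_π]
  inr_fst := by ext ⟨j, hj⟩; simp
  inr_snd := biproduct.ι_π_self f k

end

variable [Preadditive C] (f : J → C) [HasBiproduct f] (k : J)
  [HasBiproduct (Subtype.restrict (· ≠ k) f)]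

theorem biproduct.toSubtype_fromSubtype_add_π_ι :
    biproduct.toSubtype f (· ≠ k) ≫ biproduct.fromSubtype f _ + biproduct.π f k ≫ biproduct.ι f k =
      𝟙 (⨁ f) := by
  refine biproduct.hom_ext' _ _ fun j => ?_
  by_cases hj : j = k
  · subst hj
    simp [biproduct.toSubtype_fromSubtype]
  · simp [biproduct.toSubtype_fromSubtype, hj]

noncomputable def biproduct.isBilimitBinaryBiconeOfNe :
    (biproduct.binaryBiconeOfNe f k).IsBilimit :=
  isBinaryBilimitOfTotal _ (biproduct.toSubtype_fromSubtype_add_π_ι f k)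

end CategoryTheory.Limits

namespace CategoryTheory.Pretriangulated

variable {C : Type*} [Category C] [Preadditive C] [HasZeroObject C] [HasShift C ℤ]
  [∀ n : ℤ, (shiftFunctor C n).Additive] [Pretriangulated C]

lemma binaryBiconeTriangle_distinguished {X Y : C} {b : BinaryBicone X Y} (hb : b.IsBilimit) :
    Triangle.mk b.inl b.snd 0 ∈ distTriang C := by
  refine isomorphic_distinguished _ (binaryBiproductTriangle_distinguished X Y) _
    (Triangle.isoMk _ _ (Iso.refl X) (biprod.uniqueUpToIso X Y hb) (Iso.refl Y) ?_ ?_ ?_)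
  · apply biprod.hom_ext <;> simp [Triangle.mk, binaryBiproductTriangle]
  · simp [Triangle.mk, binaryBiproductTriangle]
  · simp [Triangle.mk, binaryBiproductTriangle]

end CategoryTheory.Pretriangulated

namespace CategoryTheory.Triangulated

variable {C : Type*} [Category C] [Preadditive C] [HasZeroObject C] [HasShift C ℤ]
  [∀ n : ℤ, (shiftFunctor C n).Additive] [Pretriangulated C] [IsTriangulated C]

theorem exists_distTriang_fiber_cone_cone_comp {X₁ X₂ X₃ R Z₁₂ Z₁₃ : C} {u₁₂ : X₁ ⟶ X₂}
    {i : R ⟶ X₂} {p : X₂ ⟶ X₃} {w : X₃ ⟶ R⟦(1 : ℤ)⟧} (hp : Triangle.mk i p w ∈ distTriang C)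
    {v₁₂ : X₂ ⟶ Z₁₂} {w₁₂ : Z₁₂ ⟶ X₁⟦(1 : ℤ)⟧} (h₁₂ : Triangle.mk u₁₂ v₁₂ w₁₂ ∈ distTriang C)
    {v₁₃ : X₃ ⟶ Z₁₃} {w₁₃ : Z₁₃ ⟶ X₁⟦(1 : ℤ)⟧}
    (h₁₃ : Triangle.mk (u₁₂ ≫ p) v₁₃ w₁₃ ∈ distTriang C) :
    ∃ (m₁ : Z₁₂ ⟶ Z₁₃) (m₃ : Z₁₃ ⟶ R⟦(1 : ℤ)⟧), Triangle.mk (i ≫ v₁₂) m₁ m₃ ∈ distTriang C := by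
  let H := someOctahedron rfl h₁₂ (rot_of_distTriang _ hp) h₁₃
  -- the rotated split triangle contributes `w₂₃ = -i⟦1⟧'` to the octahedron's third morphism
  have e : -((i ≫ v₁₂)⟦(1 : ℤ)⟧') = (-i⟦(1 : ℤ)⟧') ≫ v₁₂⟦(1 : ℤ)⟧' := by simp
  exact ⟨H.m₁, H.m₃, (rotate_distinguished_triangle _).mpr
    ((congrArg (fun m => Triangle.mk H.m₁ H.m₃ m ∈ distTriang C) e).mpr H.mem)⟩

end CategoryTheory.Triangulated

/-- Octahedral rearrangement: given triangles `A₀ →f ⊕ᵢ Aᵢ →g Cn →h ΣA₀` and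
`A₀ →f_k A_k →u Cfk →v ΣA₀` (where `f_k = f ≫ π_k`), there is a distinguished
triangle `Σ⁻¹Cfk → ⊕_{i ≠ k} Aᵢ → Cn → Cfk`, i.e. `Cn` is also the cone of an induced
morphism `Σ⁻¹ cone(f_k) → ⊕_{i ≠ k} Aᵢ`. -/
theorem octahedral_cone_rearrangement {C : Type*} [Category C] [HasZeroObject C]
    [Preadditive C] [HasShift C ℤ] [∀ n : ℤ, (shiftFunctor C n).Additive]
    [Pretriangulated C] [IsTriangulated C] [HasFiniteBiproducts C]
    (d : ℕ) (A₀ : C) (A : Fin d → C) (f : A₀ ⟶ ⨁ A) (k : Fin d)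
    (Cn : C) (g : ⨁ A ⟶ Cn) (h : Cn ⟶ A₀⟦(1:ℤ)⟧)
    (hT : Triangle.mk f g h ∈ (distTriang C))
    (Cfk : C) (u : A k ⟶ Cfk) (v : Cfk ⟶ A₀⟦(1:ℤ)⟧)
    (hT' : Triangle.mk (f ≫ biproduct.π A k) u v ∈ (distTriang C)) :
    ∃ (a : (Cfk⟦(-1:ℤ)⟧) ⟶ ⨁ Subtype.restrict (fun i => i ≠ k) A)
      (b : (⨁ Subtype.restrict (fun i => i ≠ k) A) ⟶ Cn)
      (c : Cn ⟶ (Cfk⟦(-1:ℤ)⟧)⟦(1:ℤ)⟧),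
      Triangle.mk a b c ∈ (distTriang C) := by
  have hsplit := binaryBiconeTriangle_distinguished (biproduct.isBilimitBinaryBiconeOfNe A k)
  obtain ⟨_, _, hfib⟩ := Triangulated.exists_distTriang_fiber_cone_cone_comp hsplit hT hT'
  exact ⟨_, _, _, inv_rot_of_distTriang _ hfib⟩
end
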